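/- Let μ be a symmetric probability measure on a finite group G and H ≤ G a subgroup. Then for all positive integers n and m, μ^(nm)(H) ≥ (μ^n(H))^m. -/
import Mathlib


variable {G : Type*}

/-- Convolution of two functions on a finite group. -/
noncomputable def conv [Group G] [Fintype G] (μ ν : G → ℝ) : G → ℝ :=
  fun g => ∑ x : G, μ (g * x⁻¹) * ν x

/-- `n`-fold convolution power of a function on a finite group
(`convPow μ 0` is the Dirac mass at the identity). -/
noncomputable def convPow [Group G] [Fintype G] [DecidableEq G] (μ : G → ℝ) : ℕ → G → ℝ
  | 0 => fun g => if g = 1 then 1 else 0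
  | n + 1 => conv μ (convPow μ n)

lemma convPow_nonneg [Group G] [Fintype G] [DecidableEq G] (μ : G → ℝ)
    (hnn : ∀ x, 0 ≤ μ x) : ∀ k x, 0 ≤ convPow μ k x := by
  intro k
  induction k with
  | zero => intro x; simp only [convPow]; split <;> norm_num
  | succ n ih =>
    intro x
    simp only [convPow, conv]
    exact Finset.sum_nonneg fun y _ => mul_nonneg (hnn _) (ih y)

lemma convPow_add [Group G] [Fintype G] [DecidableEq G] (μ : G → ℝ) (a b : ℕ) (g : G) :
    convPow μ (a + b) g = ∑ x : G, convPow μ a (g * x⁻¹) * convPow μ b x := by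
  induction a generalizing g with
  | zero =>
    simp only [Nat.zero_add, convPow, mul_inv_eq_one]
    rw [Finset.sum_eq_single g]
    · simp
    · intro x _ hx; simp [Ne.symm hx]
    · simp
  | succ a ih =>
    have h1 : a + 1 + b = (a + b) + 1 := by omega
    rw [h1]
    show conv μ (convPow μ (a + b)) g = _
    unfold conv
    simp only [ih, Finset.mul_sum]
    rw [Finset.sum_comm]
    refine Finset.sum_congr rfl fun x _ => ?_
    show _ = conv μ (convPow μ a) (g * x⁻¹) * convPow μ b x
    unfold conv
    rw [Finset.sum_mul]
    rw [← Equiv.sum_comp (Equiv.mulRight x)]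
    refine Finset.sum_congr rfl fun y _ => ?_
    simp only [Equiv.coe_mulRight, mul_inv_rev, mul_assoc, mul_inv_cancel, mul_one]

lemma convPow_subgroup_superadd [Group G] [Fintype G] [DecidableEq G] (μ : G → ℝ)
    (hnn : ∀ x, 0 ≤ μ x) (H : Subgroup G) [DecidablePred (· ∈ H)] (a b : ℕ) :
    (∑ h : H, convPow μ a (h : G)) * (∑ h : H, convPow μ b (h : G))
      ≤ ∑ h : H, convPow μ (a + b) (h : G) := by
  have hA := convPow_nonneg μ hnn a
  have hB := convPow_nonneg μ hnn b
  simp only [convPow_add]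
  have step1 : ∀ h : H, ∑ x : H, convPow μ a ((h : G) * (x : G)⁻¹) * convPow μ b (x : G)
      ≤ ∑ x : G, convPow μ a ((h : G) * x⁻¹) * convPow μ b x := by
    intro h
    rw [← Finset.sum_subtype (Finset.univ.filter (· ∈ H))
      (fun x => by simp) (fun x => convPow μ a ((h : G) * x⁻¹) * convPow μ b x)]
    exact Finset.sum_le_sum_of_subset_of_nonneg (Finset.filter_subset _ _)
      (fun x _ _ => mul_nonneg (hA _) (hB _))
  calc (∑ h : H, convPow μ a (h : G)) * (∑ h : H, convPow μ b (h : G))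
      = ∑ h : H, ∑ x : H, convPow μ a ((h : G) * (x : G)⁻¹) * convPow μ b (x : G) := by
        rw [Finset.sum_mul_sum, Finset.sum_comm]
        conv_rhs => rw [Finset.sum_comm]
        refine Finset.sum_congr rfl fun x _ => ?_
        rw [← Equiv.sum_comp (Equiv.mulRight x)
          (fun h : H => convPow μ a ((h : G) * (x : G)⁻¹) * convPow μ b (x : G))]
        refine Finset.sum_congr rfl fun h _ => ?_
        simp
    _ ≤ ∑ h : H, ∑ x : G, convPow μ a ((h : G) * x⁻¹) * convPow μ b x :=
        Finset.sum_le_sum fun h _ => step1 h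

/-- For a symmetric probability measure `μ` on a finite group and a subgroup `H`,
`μ^(nm)(H) ≥ (μ^n(H))^m` for all positive integers `n, m`. -/
theorem convPow_mul_subgroup_ge_pow [Group G] [Fintype G] [DecidableEq G]
    (μ : G → ℝ) (hnn : ∀ x, 0 ≤ μ x) (hsum : ∑ x : G, μ x = 1)
    (hsymm : ∀ x : G, μ x⁻¹ = μ x) (H : Subgroup G) [DecidablePred (· ∈ H)]
    (n m : ℕ) (hn : 1 ≤ n) (hm : 1 ≤ m) :
    (∑ h : H, convPow μ n (h : G)) ^ m ≤ ∑ h : H, convPow μ (n * m) (h : G) := by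
  clear hn hm hsum hsymm
  induction m with
  | zero =>
    simp only [pow_zero, Nat.mul_zero]
    have h1 : (1 : H) ∈ (Finset.univ : Finset H) := Finset.mem_univ _
    calc (1:ℝ) = convPow μ 0 ((1 : H) : G) := by simp [convPow]
      _ ≤ ∑ h : H, convPow μ 0 (h : G) :=
        Finset.single_le_sum (fun h _ => convPow_nonneg μ hnn 0 _) h1
  | succ m ih =>
    have hAnn : 0 ≤ ∑ h : H, convPow μ n (h : G) :=
      Finset.sum_nonneg fun h _ => convPow_nonneg μ hnn n _
    calc (∑ h : H, convPow μ n (h : G)) ^ (m + 1)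
        = (∑ h : H, convPow μ n (h : G)) ^ m * (∑ h : H, convPow μ n (h : G)) := by ring
      _ ≤ (∑ h : H, convPow μ (n * m) (h : G)) * (∑ h : H, convPow μ n (h : G)) :=
          mul_le_mul_of_nonneg_right ih hAnn
      _ ≤ ∑ h : H, convPow μ (n * m + n) (h : G) :=
          convPow_subgroup_superadd μ hnn H (n * m) n
      _ = ∑ h : H, convPow μ (n * (m + 1)) (h : G) := by ring_nf
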